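/- arXiv:2506.14792 — 2 statements merged into one kernel-verified Lean document; each statement's English description precedes it below -/
import Mathlib

section
/- Let M, L : ℝ → Matrix (Fin n) (Fin n) ℂ be entrywise differentiable families of matrices, and let λ : ℝ → ℂ and X : ℝ → (EuclideanSpace ℂ (Fin n)) be differentiable with (λ(t) • M(t) + L(t)).mulVec (X(t)) = 0 for all t. Fix t₀ and suppose Y ∈ EuclideanSpace ℂ (Fin n) is a left (adjoint) eigenvector, i.e. (λ(t₀) • M(t₀) + L(t₀))ᴴ.mulVec Y = 0, and that ⟨Y, M(t₀).mulVec (X(t₀))⟩ ≠ 0. Then the eigenvalue sensitivity formula holds: λ'(t₀) = − ⟨Y, (λ(t₀) • M'(t₀) + L'(t₀)).mulVec (X(t₀))⟩ / ⟨Y, M(t₀).mulVec (X(t₀))⟩. -/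
open Matrix

/-- **Adjoint-based eigenvalue sensitivity.**
For a differentiable family of generalized eigenpairs `(λ t, X t)` of the differentiable
matrix pencil `(M t, L t)`, i.e. `(λ t • M t + L t) (X t) = 0`, and a left (adjoint)
eigenvector `Y` at `t₀` with `⟪Y, M t₀ (X t₀)⟫ ≠ 0`, the eigenvalue sensitivity is
`λ'(t₀) = −⟪Y, (λ t₀ • M' + L') (X t₀)⟫ / ⟪Y, M t₀ (X t₀)⟫`. -/
theorem eigenvalue_sensitivity
    {n : ℕ}
    (M L : ℝ → Matrix (Fin n) (Fin n) ℂ)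
    (M' L' : Matrix (Fin n) (Fin n) ℂ)
    (lam : ℝ → ℂ) (lam' : ℂ)
    (X : ℝ → EuclideanSpace ℂ (Fin n)) (X' : EuclideanSpace ℂ (Fin n))
    (t₀ : ℝ)
    (hM : ∀ i j, HasDerivAt (fun t => M t i j) (M' i j) t₀)
    (hL : ∀ i j, HasDerivAt (fun t => L t i j) (L' i j) t₀)
    (hlam : HasDerivAt lam lam' t₀)
    (hX : HasDerivAt X X' t₀)
    (heig : ∀ t, (lam t • M t + L t).mulVec (X t) = 0)
    (Y : EuclideanSpace ℂ (Fin n))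
    (hY : (lam t₀ • M t₀ + L t₀)ᴴ.mulVec Y = 0)
    (hnondeg : inner (𝕜 := ℂ) Y (WithLp.toLp 2 ((M t₀).mulVec (X t₀))) ≠ 0) :
    lam' = - inner (𝕜 := ℂ) Y (WithLp.toLp 2 ((lam t₀ • M' + L').mulVec (X t₀))) /
        inner (𝕜 := ℂ) Y (WithLp.toLp 2 ((M t₀).mulVec (X t₀))) := by
  have hXj : ∀ j, HasDerivAt (fun t => X t j) (X' j) t₀ := fun j =>
    ((EuclideanSpace.proj j (𝕜 := ℂ)).restrictScalars ℝ).hasFDerivAt.comp_hasDerivAt t₀ hX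
  -- vector equation from differentiating the eigen equation
  have key : lam' • ((M t₀).mulVec (X t₀)) + (lam t₀ • M' + L').mulVec (X t₀)
      + (lam t₀ • M t₀ + L t₀).mulVec X' = 0 := by
    funext i
    have hd : HasDerivAt (fun t => ∑ j, (lam t * M t i j + L t i j) * X t j)
        (∑ j, ((lam' * M t₀ i j + lam t₀ * M' i j + L' i j) * X t₀ j
          + (lam t₀ * M t₀ i j + L t₀ i j) * X' j)) t₀ := by
      apply HasDerivAt.fun_sum
      intro j _
      have := (((hlam.fun_mul (hM i j)).fun_add (hL i j)).fun_mul (hXj j))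
      convert this using 1
    have hz : HasDerivAt (fun t => ∑ j, (lam t * M t i j + L t i j) * X t j) 0 t₀ := by
      have : (fun t => ∑ j, (lam t * M t i j + L t i j) * X t j) = fun _ => (0 : ℂ) := by
        funext t
        have := congrFun (heig t) i
        simpa [Matrix.mulVec, dotProduct, Matrix.add_apply, Matrix.smul_apply,
          smul_eq_mul] using this
      rw [this]
      exact hasDerivAt_const _ _
    have h0 := hd.unique hz
    simp only [Pi.add_apply, Pi.smul_apply, Matrix.mulVec, dotProduct,
      Matrix.add_apply, Matrix.smul_apply, smul_eq_mul, Pi.zero_apply]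
    rw [← h0, Finset.mul_sum, ← Finset.sum_add_distrib, ← Finset.sum_add_distrib]
    apply Finset.sum_congr rfl
    intro j _
    ring
  -- left eigenvector kills the X' term
  set A := lam t₀ • M t₀ + L t₀ with hA
  have hYA : star Y ᵥ* A = 0 := by
    have := congrArg star hY
    rwa [Matrix.star_mulVec, Matrix.conjTranspose_conjTranspose, star_zero] at this
  have hinner3 : inner (𝕜 := ℂ) Y (WithLp.toLp 2 (A.mulVec X')) = 0 := by
    have : inner (𝕜 := ℂ) Y (WithLp.toLp 2 (A.mulVec X')) = star Y ⬝ᵥ A.mulVec X' := by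
      simp [PiLp.inner_apply, dotProduct, mul_comm]
    rw [this, Matrix.dotProduct_mulVec, hYA, zero_dotProduct]
  have hsum := congrArg (fun v => inner (𝕜 := ℂ) Y (WithLp.toLp 2 v)) key
  simp only [WithLp.toLp_add, WithLp.toLp_smul, WithLp.toLp_zero, inner_add_right, inner_smul_right, inner_zero_right, hinner3, add_zero] at hsum
  rw [eq_div_iff hnondeg]
  linear_combination hsum
end

section
/- Let M, L : Matrix (Fin n) (Fin n) ℂ and let p : ℂ → ℂ be the function p(λ) = det(λ • M + L). Suppose λ₀ is a simple root of p, meaning p(λ₀) = 0 and the derivative of p at λ₀ is nonzero. Let X be a nonzero vector with (λ₀ • M + L).mulVec X = 0 and Y a nonzero vector with (λ₀ • M + L)ᴴ.mulVec Y = 0. Then ⟨Y, M.mulVec X⟩ ≠ 0. -/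
open Matrix
section AuxSimpleEig
open Finset

theorem aux_ker {n : ℕ} (B : Matrix (Fin n) (Fin n) ℂ) (hadj : adjugate B ≠ 0)
    (X : Fin n → ℂ) (hX : X ≠ 0) (hXk : B.mulVec X = 0)
    (v : Fin n → ℂ) (hv : B.mulVec v = 0) : ∃ c : ℂ, v = c • X := by
  by_contra hc
  push_neg at hc
  apply hadj
  ext i j
  simp only [Matrix.zero_apply, adjugate_apply]
  obtain ⟨u, hu0, hui, huk⟩ : ∃ u : Fin n → ℂ, u ≠ 0 ∧ u i = 0 ∧ B.mulVec u = 0 := by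
    by_cases hXi : X i = 0
    · exact ⟨X, hX, hXi, hXk⟩
    · refine ⟨v - (v i / X i) • X, ?_, ?_, ?_⟩
      · intro h
        exact hc (v i / X i) (by rwa [sub_eq_zero] at h)
      · simp [div_mul_cancel₀ _ hXi]
      · rw [Matrix.mulVec_sub, Matrix.mulVec_smul, hv, hXk, smul_zero, sub_zero]
  by_contra hdet
  apply hu0
  refine Matrix.eq_zero_of_mulVec_eq_zero hdet ?_
  funext k
  rw [Matrix.mulVec]
  by_cases hk : k = j
  · subst hk
    simp [Matrix.updateRow_apply, dotProduct, Pi.single_apply, hui]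
  · have : (B.updateRow j (Pi.single i 1)) k = B k := Matrix.updateRow_ne hk
    rw [this]
    exact congrFun huk k

theorem aux_row {n : ℕ} (A M : Matrix (Fin n) (Fin n) ℂ) (j : Fin n) :
    (A.updateRow j (M j)).det = ∑ i, M j i * adjugate A i j := by
  have h1 : (A.updateRow j (M j)).det = cramer Aᵀ (M j) j := by
    rw [cramer_apply, updateCol_transpose, det_transpose]
  have h2 : M j = ∑ i, M j i • (Pi.single i 1 : Fin n → ℂ) := by
    funext k
    simp [Pi.single_apply, Finset.sum_ite_eq', mul_comm]
  rw [h1]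
  conv_lhs => rw [h2]
  rw [map_sum]
  simp only [Finset.sum_apply, LinearMap.map_smul, Pi.smul_apply, smul_eq_mul]
  refine Finset.sum_congr rfl fun i _ => ?_
  rw [adjugate_def, of_apply]

theorem aux_deriv {n : ℕ} (M L : Matrix (Fin n) (Fin n) ℂ) (lam₀ : ℂ) :
    HasDerivAt (fun lam : ℂ => (lam • M + L).det)
      (∑ σ : Equiv.Perm (Fin n), ((Equiv.Perm.sign σ : ℤ) : ℂ) *
        ∑ j, (∏ k ∈ Finset.univ.erase j, (lam₀ • M + L) (σ k) k) * M (σ j) j) lam₀ := by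
  have hfun : (fun lam : ℂ => (lam • M + L).det)
      = fun lam : ℂ => ∑ σ : Equiv.Perm (Fin n),
          ((Equiv.Perm.sign σ : ℤ) : ℂ) * ∏ k, (lam • M + L) (σ k) k := by
    funext lam
    exact det_apply' _
  rw [hfun]
  refine HasDerivAt.fun_sum fun σ _ => ?_
  refine HasDerivAt.const_mul _ ?_
  have h := HasDerivAt.fun_finsetProd (u := Finset.univ)
    (f := fun k lam => (lam • M + L) (σ k) k) (f' := fun k => M (σ k) k) (x := lam₀)
    (fun k _ => by
      simp only [Matrix.add_apply, Matrix.smul_apply, smul_eq_mul]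
      exact (hasDerivAt_mul_const _).add_const _)
  simpa [smul_eq_mul, mul_comm] using h

theorem aux_swap {n : ℕ} (A M : Matrix (Fin n) (Fin n) ℂ) :
    ∑ σ : Equiv.Perm (Fin n), ((Equiv.Perm.sign σ : ℤ) : ℂ) *
        ∑ j, (∏ k ∈ Finset.univ.erase j, A (σ k) k) * M (σ j) j
      = ∑ j, (A.updateRow j (M j)).det := by
  simp only [det_apply']
  rw [Finset.sum_comm]
  refine Finset.sum_congr rfl fun σ _ => ?_
  rw [Finset.mul_sum]
  rw [← Equiv.sum_comp σ (fun j => ((Equiv.Perm.sign σ : ℤ) : ℂ) *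
      ∏ k, (A.updateRow j (M j)) (σ k) k)]
  refine Finset.sum_congr rfl fun j _ => ?_
  congr 1
  have hprod : ∏ k, (A.updateRow (σ j) (M (σ j))) (σ k) k
      = M (σ j) j * ∏ k ∈ Finset.univ.erase j, A (σ k) k := by
    rw [← Finset.mul_prod_erase Finset.univ _ (Finset.mem_univ j)]
    congr 1
    · rw [Matrix.updateRow_self]
    · refine Finset.prod_congr rfl fun k hk => ?_
      have : σ k ≠ σ j := fun h => (Finset.mem_erase.mp hk).1 (σ.injective h)
      rw [Matrix.updateRow_ne this]
  rw [hprod, mul_comm]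

end AuxSimpleEig

/-- **Nondegeneracy of the eigenvalue-sensitivity denominator at a simple eigenvalue.**
If `λ₀` is a simple root of `p (λ) = det (λ • M + L)` (i.e. `p λ₀ = 0` and `p' λ₀ ≠ 0`),
`X ≠ 0` is a right generalized eigenvector and `Y ≠ 0` a left (adjoint) generalized
eigenvector at `λ₀`, then `⟪Y, M X⟫ ≠ 0`. -/
theorem simple_eigenvalue_nondegenerate
    {n : ℕ} (M L : Matrix (Fin n) (Fin n) ℂ) (lam₀ : ℂ)
    (hroot : (lam₀ • M + L).det = 0)
    (hsimple : deriv (fun lam : ℂ => (lam • M + L).det) lam₀ ≠ 0)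
    (X : EuclideanSpace ℂ (Fin n)) (hX : X ≠ 0)
    (hXeig : (lam₀ • M + L).mulVec X = 0)
    (Y : EuclideanSpace ℂ (Fin n)) (hY : Y ≠ 0)
    (hYeig : (lam₀ • M + L)ᴴ.mulVec Y = 0) :
    inner (𝕜 := ℂ) Y (WithLp.toLp 2 (M.mulVec X)) ≠ 0 := by
  set A := lam₀ • M + L with hA
  -- the derivative as trace of adjugate times M
  have hD : (∑ j, ∑ i, M j i * adjugate A i j) ≠ 0 := by
    intro h
    apply hsimple
    rw [(aux_deriv M L lam₀).deriv, aux_swap,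
      Finset.sum_congr rfl fun j _ => aux_row A M j]
    exact h
  -- adjugate nonzero
  have hadj : adjugate A ≠ 0 := by
    intro h
    apply hD
    simp [h]
  have hadjH : adjugate Aᴴ ≠ 0 := by
    rw [← adjugate_conjTranspose]
    simpa using hadj
  -- columns of adjugate lie in ker A
  have h1 : A * adjugate A = 0 := by rw [mul_adjugate, hroot, zero_smul]
  have h2 : Aᴴ * adjugate Aᴴ = 0 := by
    rw [mul_adjugate, det_conjTranspose, hroot, star_zero, zero_smul]
  have hcol : ∀ j, A.mulVec (fun i => adjugate A i j) = 0 := by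
    intro j
    funext k
    have := congrFun (congrFun h1 k) j
    simpa [Matrix.mul_apply, Matrix.mulVec, dotProduct] using this
  have hcolH : ∀ i, Aᴴ.mulVec (fun k => adjugate Aᴴ k i) = 0 := by
    intro i
    funext k
    have := congrFun (congrFun h2 k) i
    simpa [Matrix.mul_apply, Matrix.mulVec, dotProduct] using this
  have hX' : (X : Fin n → ℂ) ≠ 0 := fun h => hX (by ext i; simpa using congrFun h i)
  have hY' : (Y : Fin n → ℂ) ≠ 0 := fun h => hY (by ext i; simpa using congrFun h i)
  choose c hc using fun j => aux_ker A hadj X hX' hXeig _ (hcol j)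
  choose d hd using fun i => aux_ker Aᴴ hadjH Y hY' hYeig _ (hcolH i)
  have hcij : ∀ i j, adjugate A i j = c j * X i := fun i j => congrFun (hc j) i
  have hdik : ∀ i k, adjugate A i k = (starRingEnd ℂ) (d i) * (starRingEnd ℂ) (Y k) := by
    intro i k
    have h3 : adjugate Aᴴ k i = d i * Y k := congrFun (hd i) k
    rw [← adjugate_conjTranspose] at h3
    have : (starRingEnd ℂ) (adjugate A i k) = d i * Y k := h3
    calc adjugate A i k = (starRingEnd ℂ) ((starRingEnd ℂ) (adjugate A i k)) := by
          rw [Complex.conj_conj]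
      _ = (starRingEnd ℂ) (d i * Y k) := by rw [this]
      _ = _ := RingHom.map_mul _ _ _
  -- pick a coordinate where X is nonzero
  obtain ⟨i₀, hi₀⟩ : ∃ i, X i ≠ 0 := by
    by_contra h
    push_neg at h
    exact hX' (funext h)
  set κ : ℂ := (starRingEnd ℂ) (d i₀) / X i₀ with hκ
  have hcj : ∀ j, c j = κ * (starRingEnd ℂ) (Y j) := by
    intro j
    have e1 : c j * X i₀ = (starRingEnd ℂ) (d i₀) * (starRingEnd ℂ) (Y j) := by
      rw [← hcij i₀ j, hdik i₀ j]
    rw [hκ, div_mul_eq_mul_div, eq_div_iff hi₀]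
    linear_combination e1
  -- conclude
  intro hinner
  apply hD
  have hsum : ∑ j, ∑ i, M j i * adjugate A i j
      = κ * ∑ j, (starRingEnd ℂ) (Y j) * (M.mulVec X) j := by
    rw [Finset.mul_sum]
    refine Finset.sum_congr rfl fun j _ => ?_
    rw [Matrix.mulVec, dotProduct, Finset.mul_sum, Finset.mul_sum]
    refine Finset.sum_congr rfl fun i _ => ?_
    rw [hcij i j, hcj j]
    ring
  rw [hsum]
  have : inner (𝕜 := ℂ) Y (WithLp.toLp 2 (M.mulVec X)) = ∑ j, (starRingEnd ℂ) (Y j) * (M.mulVec X) j := by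
    simp [PiLp.inner_apply, RCLike.inner_apply, mul_comm]
  rw [← this, hinner, mul_zero]
end
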